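/- arXiv:1102.3483 — 2 statements merged into one kernel-verified Lean document; each statement's English description precedes it below -/
import Mathlib

section
/- CQ_3 contains a subgraph homeomorphic to the complete bipartite graph K_{3,3}: there exist six distinct vertices a1, a2, a3, b1, b2, b3 of CQ_3 and nine paths P_{ij} in CQ_3 (for 1 <= i, j <= 3), where P_{ij} joins a_i to b_j, such that the interiors of the nine paths are pairwise disjoint and no interior vertex of any of the paths is one of the six branch vertices a1, a2, a3, b1, b2, b3. -/
/-- Vertices of the 3-dimensional cubes: binary strings `x1x2x3` of length 3. -/
abbrev Vtx3 := Bool × Bool × Bool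

/-- The 12 edges of the 3-dimensional crossed cube `CQ_3`. -/
def cq3EdgeList : List (Vtx3 × Vtx3) :=
  [ ((false,false,false),(false,false,true)),
    ((false,true,false),(false,true,true)),
    ((true,false,false),(true,false,true)),
    ((true,true,false),(true,true,true)),
    ((false,false,false),(false,true,false)),
    ((false,false,true),(false,true,true)),
    ((true,false,false),(true,true,false)),
    ((true,false,true),(true,true,true)),
    ((false,false,false),(true,false,false)),
    ((false,true,false),(true,true,false)),
    ((false,false,true),(true,true,true)),
    ((false,true,true),(true,false,true)) ]

/-- The 3-dimensional crossed cube `CQ_3`. -/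
def CQ3 : SimpleGraph Vtx3 where
  Adj u v := (u, v) ∈ cq3EdgeList ∨ (v, u) ∈ cq3EdgeList
  symm := ⟨fun _ _ h => Or.symm h⟩
  loopless := ⟨by
    intro x
    revert x
    decide⟩

instance : DecidableRel CQ3.Adj :=
  fun u v => inferInstanceAs (Decidable ((u, v) ∈ cq3EdgeList ∨ (v, u) ∈ cq3EdgeList))

/-!
Take `a = (000, 011, 110)` and `b = (001, 010, 100)`. Seven of the nine pairs `a i b j` are
edges of `CQ_3`; the other two, `011 ~ 100` and `110 ~ 001`, are joined through the two
remaining vertices `101` and `111` respectively.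
-/

open SimpleGraph

def k33Left : Fin 3 → Vtx3 := ![(false, false, false), (false, true, true), (true, true, false)]

def k33Right : Fin 3 → Vtx3 := ![(false, false, true), (false, true, false), (true, false, false)]

def k33SubdivisionVertex : Fin 3 → Fin 3 → Option Vtx3
  | 1, 2 => some (true, false, true)
  | 2, 0 => some (true, true, true)
  | _, _ => none

def k33Path : ∀ i j : Fin 3, CQ3.Walk (k33Left i) (k33Right j)
  | 1, 2 => .cons (v := (true, false, true)) (by decide) (Adj.toWalk (by decide))
  | 2, 0 => .cons (v := (true, true, true)) (by decide) (Adj.toWalk (by decide))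
  | 0, 0 | 0, 1 | 0, 2 | 1, 0 | 1, 1 | 2, 1 | 2, 2 => Adj.toWalk (by decide)

lemma k33Path_support (i j : Fin 3) :
    (k33Path i j).support = k33Left i :: (k33SubdivisionVertex i j).toList ++ [k33Right j] := by
  fin_cases i <;> fin_cases j <;> rfl

lemma k33Path_isPath (i j : Fin 3) : (k33Path i j).IsPath := by
  rw [Walk.isPath_def, k33Path_support]
  revert i j
  decide

lemma k33SubdivisionVertex_eq_of_mem_support {i j : Fin 3} {v : Vtx3}
    (hv : v ∈ (k33Path i j).support) (hi : v ≠ k33Left i) (hj : v ≠ k33Right j) :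
    k33SubdivisionVertex i j = some v := by
  rw [k33Path_support] at hv
  cases h : k33SubdivisionVertex i j <;> simp_all

lemma k33SubdivisionVertex_injective {i j k l : Fin 3} {v : Vtx3}
    (hij : k33SubdivisionVertex i j = some v) (hkl : k33SubdivisionVertex k l = some v) :
    (i, j) = (k, l) := by
  revert i j k l v
  decide

lemma k33SubdivisionVertex_ne_branch {i j : Fin 3} {v : Vtx3}
    (h : k33SubdivisionVertex i j = some v) (k : Fin 3) : v ≠ k33Left k ∧ v ≠ k33Right k := by
  revert i j v k
  decide

/-- `CQ_3` contains a subgraph homeomorphic to `K_{3,3}`: there are six distinct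
branch vertices `a 0, a 1, a 2, b 0, b 1, b 2` and nine paths `p i j` joining
`a i` to `b j` whose interiors are pairwise disjoint and avoid all six branch
vertices. -/
theorem cq3_k33_subdivision :
    ∃ (a b : Fin 3 → Vtx3) (p : ∀ i j : Fin 3, CQ3.Walk (a i) (b j)),
      Function.Injective a ∧ Function.Injective b ∧
      (∀ i j, a i ≠ b j) ∧
      (∀ i j, (p i j).IsPath) ∧
      (∀ i j k l, (i, j) ≠ (k, l) → ∀ v : Vtx3,
        (v ∈ (p i j).support ∧ v ≠ a i ∧ v ≠ b j) →
        ¬(v ∈ (p k l).support ∧ v ≠ a k ∧ v ≠ b l)) ∧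
      (∀ i j, ∀ v ∈ (p i j).support, v ≠ a i → v ≠ b j →
        ∀ k, v ≠ a k ∧ v ≠ b k) := by
  refine ⟨k33Left, k33Right, k33Path, by decide, by decide, by decide, k33Path_isPath, ?_, ?_⟩
  · rintro i j k l hne v ⟨hv, hvi, hvj⟩ ⟨hv', hvk, hvl⟩
    exact hne (k33SubdivisionVertex_injective
      (k33SubdivisionVertex_eq_of_mem_support hv hvi hvj)
      (k33SubdivisionVertex_eq_of_mem_support hv' hvk hvl))
  · intro i j v hv hvi hvj
    exact k33SubdivisionVertex_ne_branch (k33SubdivisionVertex_eq_of_mem_support hv hvi hvj)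
end

section
/- Let u1, u2, u3, u4, u5 be distinct vertices in L (the set of vertices of LTQ_4 whose first bit is 0) such that ⟨{u1, u2, u3, u4, u5}⟩ is isomorphic to C_5. Then for every i in {1, ..., 5}, the set {π(u1), π(u2), π(u3), π(u4), π(u5)} \ {π(u_i)} does not induce a subgraph of LTQ_4 isomorphic to C_4. -/
/-- The 12 edges of the 3-dimensional locally twisted cube `LTQ_3`. -/
def ltq3EdgeList : List (Vtx3 × Vtx3) :=
  [ ((false,false,false),(false,false,true)),
    ((false,false,true),(false,true,true)),
    ((false,true,true),(false,true,false)),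
    ((false,true,false),(false,false,false)),
    ((true,false,false),(true,false,true)),
    ((true,false,true),(true,true,true)),
    ((true,true,true),(true,true,false)),
    ((true,true,false),(true,false,false)),
    ((false,false,false),(true,false,false)),
    ((false,false,true),(true,true,true)),
    ((false,true,false),(true,true,false)),
    ((false,true,true),(true,false,true)) ]

/-- The 3-dimensional locally twisted cube `LTQ_3`. -/
def LTQ3 : SimpleGraph Vtx3 where
  Adj u v := (u, v) ∈ ltq3EdgeList ∨ (v, u) ∈ ltq3EdgeList
  symm := ⟨fun _ _ h => Or.symm h⟩
  loopless := by
    constructor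
    intro x
    revert x
    decide

instance : DecidableRel LTQ3.Adj :=
  fun u v => inferInstanceAs (Decidable ((u, v) ∈ ltq3EdgeList ∨ (v, u) ∈ ltq3EdgeList))

/-- Vertices of the 4-dimensional cubes: binary strings `x1x2x3x4` of length 4. -/
abbrev Vtx4 := Bool × Vtx3

/-- The twist map of the locally twisted cube:
`x2x3x4 ↦ (x2+x4)x3x4`, where `+` is addition mod 2. -/
def ltqTwist : Vtx3 → Vtx3
  | (x2, x3, x4) => (xor x2 x4, x3, x4)

/-- The 4-dimensional locally twisted cube `LTQ_4`: two copies of `LTQ_3`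
(prefixed with 0 resp. 1), and each `0x2x3x4` joined to `1(x2+x4)x3x4`. -/
def LTQ4 : SimpleGraph Vtx4 where
  Adj u v := (u.1 = v.1 ∧ LTQ3.Adj u.2 v.2)
    ∨ (u.1 = false ∧ v.1 = true ∧ v.2 = ltqTwist u.2)
    ∨ (u.1 = true ∧ v.1 = false ∧ u.2 = ltqTwist v.2)
  symm := by
    constructor
    rintro ⟨b1, x⟩ ⟨b2, y⟩ (⟨h1, h2⟩ | ⟨h1, h2, h3⟩ | ⟨h1, h2, h3⟩)
    · exact Or.inl ⟨h1.symm, h2.symm⟩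
    · exact Or.inr (Or.inr ⟨h2, h1, h3⟩)
    · exact Or.inr (Or.inl ⟨h2, h1, h3⟩)
  loopless := by
    constructor
    rintro ⟨b, x⟩ (⟨-, h⟩ | ⟨h1, h2, -⟩ | ⟨h1, h2, -⟩)
    · exact LTQ3.loopless.irrefl x h
    · subst h1; exact Bool.false_ne_true h2
    · subst h2; exact Bool.false_ne_true h1

/-- The map `π` sending a vertex `0x2x3x4` of the left copy `L` of `LTQ_3`
inside `LTQ_4` to its unique neighbour `1(x2+x4)x3x4` in the right copy. -/
def pi4 : Vtx4 → Vtx4 := fun u => (true, ltqTwist u.2)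

open Finset

namespace SimpleGraph

variable {V W : Type*} {G : SimpleGraph V} {H : SimpleGraph W}

def IsRegularOn (G : SimpleGraph V) [DecidableRel G.Adj] (s : Finset V) (d : ℕ) : Prop :=
  ∀ a ∈ s, #{b ∈ s | G.Adj a b} = d

noncomputable def Embedding.induceImage (f : G ↪g H) (S : Set V) :
    G.induce S ≃g H.induce (f '' S) where
  toEquiv := Equiv.Set.image f S f.injective
  map_rel_iff' := f.map_adj_iff

theorem card_neighborSet_induce [DecidableRel G.Adj] {s : Finset V} {a : V} (ha : a ∈ s) :
    Nat.card ((G.induce (s : Set V)).neighborSet ⟨a, ha⟩) = #{b ∈ s | G.Adj a b} := by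
  rw [← Nat.card_eq_finsetCard]
  exact Nat.card_congr ((Equiv.subtypeSubtypeEquivSubtypeInter (· ∈ s) (G.Adj a)).trans
    (Equiv.subtypeEquivRight fun _ => mem_filter.symm))

theorem isRegularOn_of_induce_iso [DecidableRel G.Adj] {s : Finset V} [H.LocallyFinite] {d : ℕ}
    (e : G.induce (s : Set V) ≃g H) (hH : H.IsRegularOfDegree d) : G.IsRegularOn s d := by
  intro a ha
  calc #{b ∈ s | G.Adj a b}
      = Nat.card ((G.induce (s : Set V)).neighborSet ⟨a, ha⟩) := (card_neighborSet_induce ha).symm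
    _ = Nat.card (H.neighborSet (e ⟨a, ha⟩)) := Nat.card_congr (e.mapNeighborSet _)
    _ = d := by rw [Nat.card_eq_fintype_card, card_neighborSet_eq_degree, hH]

theorem cycleGraph_isRegularOfDegree_two (n : ℕ) : (cycleGraph (n + 3)).IsRegularOfDegree 2 :=
  fun _ => cycleGraph_degree_three_le

end SimpleGraph

open SimpleGraph

def ltq4Copy (b : Bool) : LTQ3 ↪g LTQ4 where
  toFun x := (b, x)
  inj' _ _ h := (Prod.mk.inj h).2
  map_rel_iff' {x y} := by
    show LTQ4.Adj (b, x) (b, y) ↔ _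
    cases b <;> simp [LTQ4]

theorem ltqTwist_involutive : Function.Involutive ltqTwist := by
  unfold Function.Involutive; decide

set_option maxRecDepth 100000 in
theorem not_isRegularOn_twist_erase_of_card_eq_five : ∀ s : Finset Vtx3, #s = 5 →
    LTQ3.IsRegularOn s 2 → ∀ a ∈ s, ¬ LTQ3.IsRegularOn ((s.erase a).image ltqTwist) 2 := by
  unfold IsRegularOn
  decide

/-- If `u 0, …, u 4` are distinct vertices of the left copy `L` of `LTQ_3` in
`LTQ_4` inducing a `C_5`, then for every `i` the set
`{π(u 0), …, π(u 4)} \ {π(u i)}` does not induce a `C_4` in `LTQ_4`. -/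
theorem ltq4_c5_image (u : Fin 5 → Vtx4) (hinj : Function.Injective u)
    (hL : ∀ i, (u i).1 = false)
    (hC5 : Nonempty (LTQ4.induce (Set.range u) ≃g SimpleGraph.cycleGraph 5)) :
    ∀ i : Fin 5,
      ¬Nonempty (LTQ4.induce ((Set.range fun j => pi4 (u j)) \ {pi4 (u i)}) ≃g
        SimpleGraph.cycleGraph 4) := by
  rintro i ⟨e4⟩
  obtain ⟨e5⟩ := hC5
  set v : Fin 5 → Vtx3 := fun j => (u j).2
  have hu : u = ltq4Copy false ∘ v := funext fun j => Prod.ext (hL j) rfl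
  have hv : Function.Injective v := by rw [hu] at hinj; exact hinj.of_comp
  set s := univ.image v
  have hs : (s : Set Vtx3) = Set.range v := by simp [s]
  have hrange5 : Set.range u = ltq4Copy false '' s := by rw [hs, hu, Set.range_comp]
  have hrange4 : (Set.range fun j => pi4 (u j)) \ {pi4 (u i)} =
      ltq4Copy true '' ↑((s.erase (v i)).image ltqTwist) := by
    have hpi : (fun j => pi4 (u j)) = (ltq4Copy true ∘ ltqTwist) ∘ v := rfl
    rw [coe_image, coe_erase, hs, ← Set.image_comp, Set.image_sdiff
      ((ltq4Copy true).injective.comp ltqTwist_involutive.injective), Set.image_singleton,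
      ← Set.range_comp, hpi]
    rfl
  rw [hrange5] at e5
  rw [hrange4] at e4
  have hreg5 : LTQ3.IsRegularOn s 2 :=
    isRegularOn_of_induce_iso ((ltq4Copy false).induceImage _ |>.trans e5)
      (cycleGraph_isRegularOfDegree_two 2)
  have hreg4 : LTQ3.IsRegularOn ((s.erase (v i)).image ltqTwist) 2 :=
    isRegularOn_of_induce_iso ((ltq4Copy true).induceImage _ |>.trans e4)
      (cycleGraph_isRegularOfDegree_two 1)
  exact not_isRegularOn_twist_erase_of_card_eq_five s (card_image_of_injective _ hv) hreg5
    (v i) (mem_image_of_mem v (mem_univ i)) hreg4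
end
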